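/- Let n ≥ 1. Then twice the number of orbits of the simultaneous conjugation action of GL_2(ℤ) on the set GL_2(ℤ)_{n,3} of n-tuples of pairwise commuting 3-power order elements equals 3ⁿ + 1; that is, |GL_2(ℤ) \ GL_2(ℤ)_{n,3}| = (3ⁿ + 1)/2. -/

import Mathlib

/-- `pTuples G p n` is the set `G_{n,p}` of `n`-tuples of pairwise commuting elements
of `G`, each of order a power of `p`. -/
def pTuples (G : Type*) [Group G] (p n : ℕ) : Set (Fin n → G) :=
  {v | (∀ i j, Commute (v i) (v j)) ∧ ∀ i, ∃ k : ℕ, orderOf (v i) = p ^ k}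

/-- Simultaneous conjugation relation on a set of tuples. -/
def tupleConj {G : Type*} [Group G] {n : ℕ} (s : Set (Fin n → G)) (a b : s) : Prop :=
  ∃ g : G, ∀ i, g * a.1 i * g⁻¹ = b.1 i

/-!
A `2 × 2` integer matrix `X` with `X³ = 1 ≠ X` has determinant `1` and trace `-1`, since
`tr X³ = t³ - 3t`; a matrix with `X⁹ = 1` would therefore have `t³ - 3t = -1`, which has no
integer root, so every element of `3`-power order in `GL₂(ℤ)` satisfies `g³ = 1`. A Euclid-type
descent on the lower-left entry conjugates every element of order `3` to the matrix `ω` of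
multiplication by a primitive cube root of unity on `ℤ[ω]`, and the only elements of order
dividing `3` commuting with `ω` are `1, ω, ω²`. Hence every tuple in `GL₂(ℤ)_{n,3}` is
conjugate to `(ω^{e₁}, …, ω^{eₙ})` for some `e ∈ (ℤ/3)ⁿ`, and two such tuples are conjugate
exactly when the exponent vectors differ by a sign. Burnside's lemma for `±1` acting on
`(ℤ/3)ⁿ`, where `-1` fixes only `0`, gives `2 · #orbits = 3ⁿ + 1`.
-/

open Matrix

theorem pow_eq_one_of_pow_pow_eq_one {M : Type*} [Monoid M] {p : ℕ}
    (hM : ∀ x : M, x ^ (p ^ 2) = 1 → x ^ p = 1) :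
    ∀ (k : ℕ) (x : M), x ^ (p ^ k) = 1 → x ^ p = 1
  | 0, x, h => by rw [pow_zero, pow_one] at h; rw [h, one_pow]
  | k + 1, x, h => hM x <| by
      rw [sq, pow_mul]
      exact pow_eq_one_of_pow_pow_eq_one hM k (x ^ p) (by rw [← pow_mul, ← pow_succ', h])

theorem pow_val_pow_val {G : Type*} [Monoid G] {n : ℕ} {x : G} (hx : x ^ n = 1) (a b : ZMod n) :
    (x ^ a.val) ^ b.val = x ^ (a * b).val := by
  rw [← pow_mul, ZMod.val_mul, ← pow_eq_pow_mod _ hx]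

theorem pow_val_injective {G : Type*} [Monoid G] {n : ℕ} [NeZero n] {x : G}
    (hx : orderOf x = n) : Function.Injective fun a : ZMod n => x ^ a.val := fun a b h =>
  ZMod.val_injective n <| pow_injOn_Iio_orderOf (by simp [hx, ZMod.val_lt])
    (by simp [hx, ZMod.val_lt]) h

theorem isConj_units_conj {M : Type*} [Monoid M] (u : Mˣ) (x : M) :
    IsConj x (u * x * ↑u⁻¹) :=
  ⟨u, by simp [SemiconjBy, mul_assoc]⟩

theorem Units.isConj_of_isConj_val {M : Type*} [Monoid M] {a b : Mˣ} (h : IsConj (a : M) b) :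
    IsConj a b := by
  obtain ⟨c, hc⟩ := h
  exact isConj_iff.2 ⟨c, Units.ext <| by rw [Units.val_mul, Units.val_mul, hc.eq, mul_assoc,
    Units.mul_inv, mul_one]⟩

theorem Int.exists_two_mul_natAbs_add_mul_le (a : ℤ) {c : ℤ} (hc : c ≠ 0) :
    ∃ k, 2 * (a + k * c).natAbs ≤ c.natAbs := by
  have hm : 0 < c.natAbs := Int.natAbs_pos.2 hc
  obtain ⟨q, hq⟩ : c ∣ Int.bmod a c.natAbs - a :=
    Int.natAbs_dvd.1 (Int.ModEq.dvd Int.bmod_emod.symm)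
  have h1 := Int.le_bmod (x := a) hm
  have h2 := Int.bmod_le (x := a) hm
  refine ⟨q, ?_⟩
  rw [mul_comm q c]
  omega

theorem Int.natAbs_lt_of_mul_eq_neg {b c y : ℤ} (h : b * c = -(y ^ 2 + y + 1))
    (hy : 2 * y.natAbs ≤ c.natAbs) (hc : 2 ≤ c.natAbs) : b.natAbs < c.natAbs := by
  zify at *
  have : |b| * |c| = y ^ 2 + y + 1 := by
    rw [← abs_mul, h, abs_neg, abs_of_nonneg (by nlinarith [sq_nonneg (2 * y + 1)])]
  nlinarith [abs_nonneg b, le_abs_self y, neg_abs_le y, sq_abs y]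

namespace Matrix

section FinTwo

variable {R : Type*} [CommRing R] (M : Matrix (Fin 2) (Fin 2) R)

theorem sq_fin_two_eq : M ^ 2 = M.trace • M - M.det • 1 := by
  rw [eta_fin_two M]
  ext i j
  fin_cases i <;> fin_cases j <;> simp [sq, trace_fin_two, det_fin_two] <;> ring

theorem pow_three_fin_two_eq :
    M ^ 3 = (M.trace ^ 2 - M.det) • M - (M.trace * M.det) • 1 := by
  rw [pow_succ, sq_fin_two_eq, sub_mul, smul_mul_assoc, smul_mul_assoc, ← sq, sq_fin_two_eq,
    one_mul]
  module

theorem trace_pow_three_fin_two : (M ^ 3).trace = M.trace ^ 3 - 3 * M.trace * M.det := by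
  simp only [pow_three_fin_two_eq, trace_sub, trace_smul, trace_one, Fintype.card_fin, smul_eq_mul]
  push_cast
  ring

end FinTwo

theorem det_eq_one_of_pow_eq_one {n : Type*} [Fintype n] [DecidableEq n]
    {X : Matrix n n ℤ} {m : ℕ} (hm : Odd m) (h : X ^ m = 1) : X.det = 1 := by
  have hdet : X.det ^ m = 1 := by rw [← det_pow, h, det_one]
  rcases (pow_eq_one_iff_of_ne_zero hm.pos.ne').1 hdet with h1 | ⟨-, heven⟩
  · exact h1
  · exact absurd heven (Nat.not_even_iff_odd.2 hm)

theorem trace_eq_neg_one_of_pow_three_eq_one {X : Matrix (Fin 2) (Fin 2) ℤ}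
    (h : X ^ 3 = 1) (hX : X ≠ 1) : X.trace = -1 := by
  have hdet : X.det = 1 := det_eq_one_of_pow_eq_one (by decide) h
  have htr : (X.trace - 2) * (X.trace + 1) ^ 2 = 0 := by
    have := trace_pow_three_fin_two X
    rw [h, hdet, trace_one, Fintype.card_fin] at this
    push_cast at this
    linear_combination -this
  rcases mul_eq_zero.1 htr with h2 | h1
  · -- a trace-2 cube root of unity is `1 + N` with `N² = 0`, so `1 = X³ = 1 + 3N`
    have h3 : (3 : ℤ) • (X - 1) = X ^ 3 - 1 := by
      rw [pow_three_fin_two_eq, hdet, sub_eq_zero.1 h2]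
      module
    rw [h, sub_self] at h3
    refine absurd ?_ hX
    ext i j
    have := congrFun₂ h3 i j
    simp only [smul_apply, sub_apply, zero_apply, smul_eq_mul] at this
    omega
  · exact eq_neg_of_add_eq_zero_left (pow_eq_zero_iff two_ne_zero |>.1 h1)

theorem pow_three_eq_one_of_pow_nine_eq_one {X : Matrix (Fin 2) (Fin 2) ℤ}
    (h : X ^ 9 = 1) : X ^ 3 = 1 := by
  by_contra hX
  have htr := trace_eq_neg_one_of_pow_three_eq_one (by rw [← pow_mul, h]) hX
  rw [trace_pow_three_fin_two, det_eq_one_of_pow_eq_one (by decide) h] at htr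
  have hunit : X.trace * (X.trace ^ 2 - 3) = -1 := by linear_combination htr
  rcases Int.eq_one_or_neg_one_of_mul_eq_neg_one hunit with h1 | h1 <;>
    rw [h1] at hunit <;> norm_num at hunit

theorem antidiag_mul_eq_of_trace_det {X : Matrix (Fin 2) (Fin 2) ℤ} (htr : X.trace = -1)
    (hdet : X.det = 1) : X 0 1 * X 1 0 = -(X 0 0 ^ 2 + X 0 0 + 1) := by
  rw [trace_fin_two] at htr
  rw [det_fin_two] at hdet
  linear_combination -hdet + X 0 0 * htr

end Matrix

/-- Multiplication by a primitive cube root of unity `ω` on `ℤ[ω]`, in the basis `1, ω`. -/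
def zeta3 : GL (Fin 2) ℤ := ⟨!![0, -1; 1, -1], !![-1, 1; -1, 0], by decide, by decide⟩

def upperShear (k : ℤ) : GL (Fin 2) ℤ :=
  ⟨!![1, k; 0, 1], !![1, -k; 0, 1], by simp [one_fin_two], by simp [one_fin_two]⟩

def quarterTurn : GL (Fin 2) ℤ := ⟨!![0, -1; 1, 0], !![0, 1; -1, 0], by decide, by decide⟩

def diagReflection : GL (Fin 2) ℤ := ⟨!![1, 0; 0, -1], !![1, 0; 0, -1], by decide, by decide⟩

def antidiagSwap : GL (Fin 2) ℤ := ⟨!![0, 1; 1, 0], !![0, 1; 1, 0], by decide, by decide⟩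

theorem zeta3_pow_three : zeta3 ^ 3 = 1 := by decide

theorem orderOf_zeta3 : orderOf zeta3 = 3 := orderOf_eq_prime zeta3_pow_three (by decide)

namespace Matrix

theorem eq_zeta3_of_trace_det {X : Matrix (Fin 2) (Fin 2) ℤ} (htr : X.trace = -1)
    (hdet : X.det = 1) (h00 : X 0 0 = 0) (h10 : X 1 0 = 1) : X = zeta3 := by
  have h01 := antidiag_mul_eq_of_trace_det htr hdet
  rw [trace_fin_two] at htr
  rw [h00, h10] at h01
  ext i j
  fin_cases i <;> fin_cases j <;> simp [zeta3] <;> omega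

/- Descent on `|X 1 0|`: a shear makes `2 |X 0 0| ≤ |X 1 0|`, which forces `|X 0 1| < |X 1 0|`
unless `|X 1 0| = 1`, and the quarter turn then moves `-X 0 1` to the lower-left corner. -/
theorem isConj_zeta3_of_trace_det {X : Matrix (Fin 2) (Fin 2) ℤ} (htr : X.trace = -1)
    (hdet : X.det = 1) : IsConj X zeta3 := by
  induction h : (X 1 0).natAbs using Nat.strong_induction_on generalizing X with
  | _ N ih =>
  have hc : X 1 0 ≠ 0 := by
    intro hc
    have := antidiag_mul_eq_of_trace_det htr hdet
    rw [hc, mul_zero] at this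
    nlinarith [sq_nonneg (2 * X 0 0 + 1)]
  obtain ⟨k, hk⟩ := Int.exists_two_mul_natAbs_add_mul_le (X 0 0) hc
  have hY00 : ((upperShear k).val * X * (upperShear k)⁻¹.val) 0 0 = X 0 0 + k * X 1 0 := by
    simp [upperShear, vecMul, dotProduct, mul_apply, Fin.sum_univ_two]
  have hY10 : ((upperShear k).val * X * (upperShear k)⁻¹.val) 1 0 = X 1 0 := by
    simp [upperShear, vecMul, dotProduct, mul_apply, Fin.sum_univ_two]
  refine (isConj_units_conj (upperShear k) X).trans ?_
  have hYtr := (trace_units_conj (upperShear k) X).trans htr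
  have hYdet := (det_units_conj (upperShear k) X).trans hdet
  generalize (upperShear k).val * X * (upperShear k)⁻¹.val = Y at hY00 hY10 hYtr hYdet
  rcases (by omega : X 1 0 = 1 ∨ X 1 0 = -1 ∨ 2 ≤ N) with h1 | h1 | h2
  · rw [eq_zeta3_of_trace_det hYtr hYdet (by omega) (by omega)]
  · have hZ00 : (diagReflection.val * Y * diagReflection⁻¹.val) 0 0 = Y 0 0 := by
      simp [diagReflection, vecMul, dotProduct, mul_apply, Fin.sum_univ_two]
    have hZ10 : (diagReflection.val * Y * diagReflection⁻¹.val) 1 0 = -Y 1 0 := by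
      simp [diagReflection, vecMul, dotProduct, mul_apply, Fin.sum_univ_two]
    refine (isConj_units_conj diagReflection Y).trans ?_
    rw [eq_zeta3_of_trace_det ((trace_units_conj _ Y).trans hYtr)
      ((det_units_conj _ Y).trans hYdet) (by omega) (by omega)]
  · have hZ10 : (quarterTurn.val * Y * quarterTurn⁻¹.val) 1 0 = -Y 0 1 := by
      simp [quarterTurn, vecMul, dotProduct, mul_apply, Fin.sum_univ_two]
    refine (isConj_units_conj quarterTurn Y).trans ?_
    refine ih _ ?_ ((trace_units_conj _ Y).trans hYtr) ((det_units_conj _ Y).trans hYdet) rfl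
    rw [hZ10, Int.natAbs_neg, ← h, ← hY10]
    exact Int.natAbs_lt_of_mul_eq_neg (antidiag_mul_eq_of_trace_det hYtr hYdet) (by omega)
      (by omega)

theorem eq_zeta3_or_eq_zeta3_sq_of_commute {X : Matrix (Fin 2) (Fin 2) ℤ} (htr : X.trace = -1)
    (hdet : X.det = 1) (hc : X * zeta3 = zeta3 * X) :
    X = zeta3 ∨ X = (zeta3 : Matrix (Fin 2) (Fin 2) ℤ) ^ 2 := by
  have h00 := congrFun₂ hc 0 0
  have h01 := congrFun₂ hc 0 1
  simp [zeta3, mul_apply, Fin.sum_univ_two] at h00 h01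
  rw [trace_fin_two] at htr
  rw [det_fin_two] at hdet
  -- `X` commutes with `ω`, so it is `a + c ω`; its trace and determinant force `c = 2a + 1` and
  -- `3a² + 3a + 1 = 1`
  have hb : X 0 1 = -1 - 2 * X 0 0 := by omega
  have hc : X 1 0 = 1 + 2 * X 0 0 := by omega
  have hd : X 1 1 = -1 - X 0 0 := by omega
  rw [hb, hc, hd] at hdet
  have ha : X 0 0 * (X 0 0 + 1) = 0 := by linarith
  rcases mul_eq_zero.1 ha with ha | ha
  · left
    ext i j
    fin_cases i <;> fin_cases j <;> simp [zeta3] <;> omega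
  · right
    ext i j
    fin_cases i <;> fin_cases j <;> simp [zeta3, sq] <;> omega

namespace GeneralLinearGroup

theorem trace_eq_neg_one_of_pow_three_eq_one {g : GL (Fin 2) ℤ} (h3 : g ^ 3 = 1) (h1 : g ≠ 1) :
    (g : Matrix (Fin 2) (Fin 2) ℤ).trace = -1 :=
  Matrix.trace_eq_neg_one_of_pow_three_eq_one
    (by rw [← Units.val_pow_eq_pow_val, h3, Units.val_one]) (by rwa [Ne, Units.val_eq_one])

theorem det_eq_one_of_pow_three_eq_one {g : GL (Fin 2) ℤ} (h3 : g ^ 3 = 1) :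
    (g : Matrix (Fin 2) (Fin 2) ℤ).det = 1 :=
  Matrix.det_eq_one_of_pow_eq_one (by decide : Odd 3)
    (by rw [← Units.val_pow_eq_pow_val, h3, Units.val_one])

theorem pow_three_eq_one_of_pow_three_pow_eq_one {g : GL (Fin 2) ℤ} {k : ℕ} (h : g ^ 3 ^ k = 1) :
    g ^ 3 = 1 := by
  refine pow_eq_one_of_pow_pow_eq_one (fun x hx => ?_) k g h
  ext1
  simpa using Matrix.pow_three_eq_one_of_pow_nine_eq_one (by simpa using congrArg Units.val hx)

theorem isConj_zeta3_of_pow_three_eq_one {g : GL (Fin 2) ℤ} (h3 : g ^ 3 = 1) (h1 : g ≠ 1) :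
    IsConj g zeta3 :=
  Units.isConj_of_isConj_val <| isConj_zeta3_of_trace_det
    (trace_eq_neg_one_of_pow_three_eq_one h3 h1) (det_eq_one_of_pow_three_eq_one h3)

theorem exists_eq_zeta3_pow_of_commute {g : GL (Fin 2) ℤ} (h3 : g ^ 3 = 1)
    (hc : Commute g zeta3) : ∃ e : ZMod 3, g = zeta3 ^ e.val := by
  by_cases h1 : g = 1
  · exact ⟨0, by simp [h1]⟩
  have hX := congrArg Units.val hc.eq
  rw [Units.val_mul, Units.val_mul] at hX
  rcases eq_zeta3_or_eq_zeta3_sq_of_commute (trace_eq_neg_one_of_pow_three_eq_one h3 h1)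
    (det_eq_one_of_pow_three_eq_one h3) hX with h | h
  · exact ⟨1, Units.ext <| by rw [h, ZMod.val_one, pow_one]⟩
  · exact ⟨2, Units.ext <| by rw [h, Units.val_pow_eq_pow_val]; rfl⟩

end GeneralLinearGroup

end Matrix

theorem exists_conj_zeta3_eq_pow (u : (ZMod 3)ˣ) :
    ∃ g : GL (Fin 2) ℤ, g * zeta3 * g⁻¹ = zeta3 ^ (u : ZMod 3).val := by
  obtain rfl | rfl : u = 1 ∨ u = -1 := by revert u; decide
  · exact ⟨1, by simp [ZMod.val_one]⟩
  · exact ⟨antidiagSwap, by decide⟩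

theorem conj_zeta3_pow {g : GL (Fin 2) ℤ} {s : ZMod 3} (hg : g * zeta3 * g⁻¹ = zeta3 ^ s.val)
    (e : ZMod 3) : g * zeta3 ^ e.val * g⁻¹ = zeta3 ^ (s * e).val := by
  rw [← conj_pow, hg, pow_val_pow_val zeta3_pow_three]

theorem conj_zeta3_of_conj_zeta3_pow {g : GL (Fin 2) ℤ} {a b : ZMod 3} (ha : a ≠ 0)
    (h : g * zeta3 ^ a.val * g⁻¹ = zeta3 ^ b.val) : g * zeta3 * g⁻¹ = zeta3 ^ (b * a).val := by
  have haa : a * a = 1 := (by decide : ∀ x : ZMod 3, x ≠ 0 → x * x = 1) a ha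
  rw [← pow_val_pow_val zeta3_pow_three, ← h, conj_pow, pow_val_pow_val zeta3_pow_three, haa,
    ZMod.val_one, pow_one]

theorem tupleConj_equivalence {G : Type*} [Group G] {n : ℕ} (s : Set (Fin n → G)) :
    Equivalence (tupleConj s) where
  refl _ := ⟨1, by simp⟩
  symm := fun ⟨g, hg⟩ => ⟨g⁻¹, fun i => by rw [← hg i]; group⟩
  trans := fun ⟨g, hg⟩ ⟨h, hh⟩ => ⟨h * g, fun i => by rw [← hh i, ← hg i]; group⟩

section Tuples

variable {n : ℕ}

def zeta3Tuple (e : Fin n → ZMod 3) : pTuples (GL (Fin 2) ℤ) 3 n :=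
  ⟨fun i => zeta3 ^ (e i).val, fun _ _ => (Commute.refl zeta3).pow_pow _ _, fun i =>
    exists_orderOf_eq_prime_pow_iff.2 ⟨1, by rw [pow_one, ← pow_mul, mul_comm, pow_mul,
      zeta3_pow_three, one_pow]⟩⟩

theorem tupleConj_zeta3Tuple_iff {e e' : Fin n → ZMod 3} :
    tupleConj _ (zeta3Tuple e) (zeta3Tuple e') ↔ e' ∈ MulAction.orbit (ZMod 3)ˣ e := by
  constructor
  · rintro ⟨g, hg⟩
    by_cases he : e = 0
    · refine ⟨1, funext fun i => ?_⟩
      have hi : zeta3 ^ (0 : ZMod 3).val = zeta3 ^ (e' i).val := by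
        simpa [zeta3Tuple, he] using hg i
      simp [he, ← pow_val_injective orderOf_zeta3 hi]
    obtain ⟨i, hi⟩ := Function.ne_iff.1 he
    have hs := conj_zeta3_of_conj_zeta3_pow hi (hg i)
    have hs0 : e' i * e i ≠ 0 := by
      intro h0
      rw [h0, ZMod.val_zero, pow_zero, conj_eq_one_iff] at hs
      exact absurd hs (by decide)
    refine ⟨Units.mk0 _ hs0, funext fun j => pow_val_injective orderOf_zeta3 ?_⟩
    change zeta3 ^ (Units.mk0 _ hs0 • e j).val = zeta3 ^ (e' j).val
    rw [Units.smul_def, Units.val_mk0, smul_eq_mul, ← conj_zeta3_pow hs]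
    exact hg j
  · rintro ⟨u, rfl⟩
    obtain ⟨g, hg⟩ := exists_conj_zeta3_eq_pow u
    exact ⟨g, fun i => conj_zeta3_pow hg (e i)⟩

theorem exists_tupleConj_zeta3Tuple (v : pTuples (GL (Fin 2) ℤ) 3 n) :
    ∃ e, tupleConj _ v (zeta3Tuple e) := by
  have h3 (i : Fin n) : v.1 i ^ 3 = 1 :=
    have ⟨_, hk⟩ := exists_orderOf_eq_prime_pow_iff.1 (v.2.2 i)
    GeneralLinearGroup.pow_three_eq_one_of_pow_three_pow_eq_one hk
  by_cases hv : ∀ i, v.1 i = 1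
  · exact ⟨0, 1, fun i => by simp [zeta3Tuple, hv]⟩
  obtain ⟨i, hi⟩ := not_forall.1 hv
  obtain ⟨g, hg⟩ := isConj_iff.1 (GeneralLinearGroup.isConj_zeta3_of_pow_three_eq_one (h3 i) hi)
  have hcomm (j : Fin n) : Commute (g * v.1 j * g⁻¹) zeta3 :=
    hg ▸ by simpa using (v.2.1 j i).map (MulAut.conj g)
  choose e he using fun j => GeneralLinearGroup.exists_eq_zeta3_pow_of_commute
    (by rw [conj_pow, h3, mul_one, mul_inv_cancel]) (hcomm j)
  exact ⟨e, g, he⟩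

end Tuples

theorem card_quot_tupleConj_eq_card_orbits (n : ℕ) :
    Nat.card (Quot (tupleConj (pTuples (GL (Fin 2) ℤ) 3 n))) =
      Nat.card (Quotient (MulAction.orbitRel (ZMod 3)ˣ (Fin n → ZMod 3))) := by
  have hequiv := tupleConj_equivalence (pTuples (GL (Fin 2) ℤ) 3 n)
  refine (Nat.card_eq_of_bijective (Quotient.lift (fun e => Quot.mk _ (zeta3Tuple e))
    fun e e' h => Quot.sound (tupleConj_zeta3Tuple_iff.2 (MulAction.mem_orbit_symm.1 h)))
    ⟨?_, ?_⟩).symm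
  · rintro ⟨e⟩ ⟨e'⟩ h
    exact Quotient.sound <| MulAction.mem_orbit_symm.1 <|
      tupleConj_zeta3Tuple_iff.1 (hequiv.eqvGen_iff.1 (Quot.eqvGen_exact h))
  · rintro ⟨v⟩
    obtain ⟨e, he⟩ := exists_tupleConj_zeta3Tuple v
    exact ⟨⟦e⟧, Quot.sound (hequiv.symm he)⟩

open MulAction in
theorem two_mul_card_orbits_units_zmod_three (n : ℕ) :
    2 * Nat.card (Quotient (orbitRel (ZMod 3)ˣ (Fin n → ZMod 3))) = 3 ^ n + 1 := by
  classical
  have hburnside := sum_card_fixedBy_eq_card_orbits_mul_card_group (ZMod 3)ˣ (Fin n → ZMod 3)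
  have hfix1 : Fintype.card (fixedBy (Fin n → ZMod 3) (1 : (ZMod 3)ˣ)) = 3 ^ n := by
    simp [fixedBy_one_eq_univ]
  have hfix2 : Fintype.card (fixedBy (Fin n → ZMod 3) (-1 : (ZMod 3)ˣ)) = 1 := by
    refine Fintype.card_eq_one_iff.2 ⟨⟨0, smul_zero _⟩, fun ⟨e, he⟩ => Subtype.ext <| funext
      fun i => ?_⟩
    exact (by decide : ∀ x : ZMod 3, (-1 : (ZMod 3)ˣ) • x = x → x = 0) _ (congrFun he i)
  rw [(by decide : (Finset.univ : Finset (ZMod 3)ˣ) = {1, -1}), Finset.sum_pair (by decide),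
    hfix1, hfix2, (by decide : Fintype.card (ZMod 3)ˣ = 2)] at hburnside
  rw [Nat.card_eq_fintype_card]
  omega

theorem gl2_orbit_count_general (n : ℕ) :
    2 * Nat.card
        (Quot (tupleConj (pTuples (Matrix.GeneralLinearGroup (Fin 2) ℤ) 3 n))) =
      3 ^ n + 1 := by
  rw [card_quot_tupleConj_eq_card_orbits, two_mul_card_orbits_units_zmod_three]

/-- Twice the number of orbits of `GL₂(ℤ)` acting by simultaneous conjugation on
`GL₂(ℤ)_{n,3}` equals `3ⁿ + 1`. -/
theorem gl2_orbit_count (n : ℕ) (hn : 1 ≤ n) :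
    2 * Nat.card
        (Quot (tupleConj (pTuples (Matrix.GeneralLinearGroup (Fin 2) ℤ) 3 n))) =
      3 ^ n + 1 :=
  gl2_orbit_count_general n
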